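/- For positive reals a_{ij} (denoting φ¹_{ij}λ¹_i) and vectors g_{ij} ∈ ℝ^{KL} whose first coordinate is a_{ij} − χ for a constant χ ≠ 0, the equation ∑_{i,j} (g_{ij}/a_{ij})/(1 + εᵀ g_{ij}/a_{ij}) = 0 is equivalent to ∑_{i,j} g_{ij}/(1 + ρᵀ g_{ij}) = 0, where ρ = ((ε₁+1)/χ, ε₂/χ, …, ε_{KL}/χ), provided all denominators are nonzero. -/

import Mathlib

open Finset Matrix

/-- Equivalence of the ε-parametrized and ρ-parametrized empirical
likelihood equations, where `ρ₁ = (ε₁+1)/χ` and `ρₖ = εₖ/χ` for `k ≥ 2`,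
and the first coordinate of `g i j` is `a i j − χ`. -/
theorem stmt_4 (s KL : ℕ) (hKL : 0 < KL) (m : Fin s → ℕ)
    (χ : ℝ) (hχ : χ ≠ 0)
    (a : (i : Fin s) → Fin (m i) → ℝ) (ha : ∀ i j, 0 < a i j)
    (g : (i : Fin s) → Fin (m i) → (Fin KL → ℝ))
    (hg : ∀ i j, g i j ⟨0, hKL⟩ = a i j - χ)
    (ε ρ : Fin KL → ℝ)
    (hρ0 : ρ ⟨0, hKL⟩ = (ε ⟨0, hKL⟩ + 1) / χ)
    (hρ : ∀ k : Fin KL, k ≠ ⟨0, hKL⟩ → ρ k = ε k / χ)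
    (hden : ∀ i j, a i j + ε ⬝ᵥ g i j ≠ 0) :
    (∑ i, ∑ j, (1 + ε ⬝ᵥ g i j / a i j)⁻¹ • ((a i j)⁻¹ • g i j) = 0) ↔
      (∑ i, ∑ j, (1 + ρ ⬝ᵥ g i j)⁻¹ • g i j = 0) := by
  have hρeq : ρ = χ⁻¹ • ε + χ⁻¹ • (Pi.single (⟨0, hKL⟩ : Fin KL) (1 : ℝ) : Fin KL → ℝ) := by
    funext k
    by_cases hk : k = ⟨0, hKL⟩
    · subst hk
      simp [hρ0, Pi.single_eq_same, div_eq_mul_inv, mul_comm, add_mul]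
      ring
    · simp [hρ k hk, Pi.single_eq_of_ne hk, div_eq_mul_inv, mul_comm]
  have key : ∀ i j, (1 + ρ ⬝ᵥ g i j)⁻¹ • g i j
      = χ • ((1 + ε ⬝ᵥ g i j / a i j)⁻¹ • ((a i j)⁻¹ • g i j)) := by
    intro i j
    have hρd : ρ ⬝ᵥ g i j = χ⁻¹ * (ε ⬝ᵥ g i j) + χ⁻¹ * (a i j - χ) := by
      rw [hρeq, add_dotProduct, smul_dotProduct,
        smul_dotProduct, single_dotProduct, hg]
      simp [smul_eq_mul]
    have h1 : 1 + ρ ⬝ᵥ g i j = (a i j + ε ⬝ᵥ g i j) / χ := by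
      rw [hρd]; field_simp; ring
    have ha' : a i j ≠ 0 := (ha i j).ne'
    have h2 : 1 + ε ⬝ᵥ g i j / a i j = (a i j + ε ⬝ᵥ g i j) / a i j := by
      field_simp
    rw [h1, h2, smul_smul, smul_smul]
    congr 1
    rw [inv_div, inv_div]
    field_simp [hden i j]
  calc (∑ i, ∑ j, (1 + ε ⬝ᵥ g i j / a i j)⁻¹ • ((a i j)⁻¹ • g i j) = 0)
      ↔ χ • (∑ i, ∑ j, (1 + ε ⬝ᵥ g i j / a i j)⁻¹ • ((a i j)⁻¹ • g i j)) = 0 := by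
        rw [smul_eq_zero]; simp [hχ]
    _ ↔ (∑ i, ∑ j, (1 + ρ ⬝ᵥ g i j)⁻¹ • g i j = 0) := by
        rw [Finset.smul_sum]
        simp_rw [Finset.smul_sum, key]
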